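/- arXiv:math/0510295 — 4 statements merged into one kernel-verified Lean document; each statement's English description precedes it below -/
import Mathlib

section
/- The n−1 matrices Ĥ_1, …, Ĥ_m, H_1^⊥, …, H_p^⊥ (note m + p = n − 1) are linearly independent and span the space of traceless diagonal n×n complex matrices; in particular the Cartan subalgebra of sl(n,ℂ) decomposes as the direct sum of the span of {Ĥ_l} and the span H^⊥ of {H_s^⊥}. -/
open Matrix Finset

/-- The matrix unit `E_{i,j}` (1-based indices), `0` for out-of-range indices. -/
def E (n : ℕ) (i j : ℕ) : Matrix (Fin n) (Fin n) ℂ :=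
  if h : 1 ≤ i ∧ i ≤ n ∧ 1 ≤ j ∧ j ≤ n then
    Matrix.single ⟨i - 1, by omega⟩ ⟨j - 1, by omega⟩ 1
  else 0

/-- The Cartan element `Ĥ_l` of the `l`-th link of the full chain. -/
noncomputable def Hhat (n l : ℕ) : Matrix (Fin n) (Fin n) ℂ :=
  if Odd l then
    ((2 * (l : ℂ) - 1) / (n : ℂ)) • (1 : Matrix (Fin n) (Fin n) ℂ)
      - ∑ u ∈ Finset.Icc 1 (l - 1), E n u u - ∑ u ∈ Finset.Icc (n - l + 1) n, E n u u
  else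
    (-((2 * (l : ℂ) - 1) / (n : ℂ))) • (1 : Matrix (Fin n) (Fin n) ℂ)
      + ∑ u ∈ Finset.Icc 1 l, E n u u + ∑ u ∈ Finset.Icc (n - l + 2) n, E n u u

/-- The element `H_s^⊥` of the complement `H^⊥` of the chain's Cartan carrier. -/
noncomputable def Hperp (n s : ℕ) : Matrix (Fin n) (Fin n) ℂ :=
  ((-1 : ℂ) ^ s) •
    ((-(2 * (s : ℂ) / (n : ℂ))) • (1 : Matrix (Fin n) (Fin n) ℂ)
      + ∑ u ∈ Finset.Icc 1 s, (E n u u + E n (n - u + 1) (n - u + 1)))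

/-!
Modulo scalar matrices, `(-1)^s • H_s^⊥` is the sum of the units `E_{u,u}` over the `s` outermost
indices at each end of the diagonal, and `(-1)^l • Ĥ_l` differs from `(-1)^(l-1) • H_{l-1}^⊥` by a
single unit `E_{a,a}`, where `a = n + 1 - l` for odd `l` and `a = l` for even `l`. So the span of
the `Ĥ_l, H_s^⊥` contains all but at most one of the centred units `E_{u,u} - I/n`; as these `n`
matrices sum to zero, it contains all of them, hence every traceless diagonal matrix. That space
has dimension `n - 1`, the number of generators, so they are linearly independent.
-/

section TracelessDiagonal

variable {ι K : Type*} [Fintype ι] [DecidableEq ι] [Field K]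

variable (ι K) in
def tracelessDiagonal : Submodule K (Matrix ι ι K) :=
  (LinearMap.ker (traceLinearMap ι K K ∘ₗ diagonalLinearMap ι K K)).map (diagonalLinearMap ι K K)

theorem mem_tracelessDiagonal_iff {A : Matrix ι ι K} :
    A ∈ tracelessDiagonal ι K ↔ A.IsDiag ∧ A.trace = 0 := by
  constructor
  · rintro ⟨d, hd, rfl⟩
    exact ⟨isDiag_diagonal d, hd⟩
  · rintro ⟨hA, htr⟩
    exact ⟨A.diag, by simpa [hA.diagonal_diag] using htr, hA.diagonal_diag⟩

theorem finrank_tracelessDiagonal [Nonempty ι] :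
    Module.finrank K (tracelessDiagonal ι K) = Fintype.card ι - 1 := by
  have hφ : Function.Surjective (traceLinearMap ι K K ∘ₗ diagonalLinearMap ι K K) := fun c =>
    ⟨Pi.single (Classical.arbitrary ι) c, by simp⟩
  have hrank :=
    LinearMap.finrank_range_add_finrank_ker (traceLinearMap ι K K ∘ₗ diagonalLinearMap ι K K)
  rw [LinearMap.range_eq_top.2 hφ, finrank_top, Module.finrank_self,
    Module.finrank_fintype_fun_eq_card] at hrank
  rw [tracelessDiagonal, ← (Submodule.equivMapOfInjective _ (diagonal_injective) _).finrank_eq]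
  omega

variable (K) in
def centeredSingle (i : ι) : Matrix ι ι K := single i i 1 - (Fintype.card ι : K)⁻¹ • 1

theorem centeredSingle_mem_tracelessDiagonal (h : (Fintype.card ι : K) ≠ 0) (i : ι) :
    centeredSingle K i ∈ tracelessDiagonal ι K := by
  rw [mem_tracelessDiagonal_iff, centeredSingle, trace_sub, trace_single_eq_same, trace_smul,
    trace_one, smul_eq_mul, inv_mul_cancel₀ h, sub_self]
  exact ⟨(diagonal_single i (1 : K) ▸ isDiag_diagonal _).sub (isDiag_one.smul _), rfl⟩

theorem sum_centeredSingle (h : (Fintype.card ι : K) ≠ 0) :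
    ∑ i : ι, centeredSingle K i = 0 := by
  simp only [centeredSingle]
  rw [Finset.sum_sub_distrib, sum_single_one, Finset.sum_const, Finset.card_univ,
    ← Nat.cast_smul_eq_nsmul K, smul_smul, mul_inv_cancel₀ h, one_smul, sub_self]

theorem tracelessDiagonal_le_of_centeredSingle_mem {S : Submodule K (Matrix ι ι K)}
    (h : (Fintype.card ι : K) ≠ 0) (hS : {i | centeredSingle K i ∉ S}.Subsingleton) :
    tracelessDiagonal ι K ≤ S := by
  have hmem : ∀ i, centeredSingle K i ∈ S := by
    intro i
    by_contra hi
    have hsum : centeredSingle K i = -∑ j ∈ univ.erase i, centeredSingle K j := by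
      rw [eq_neg_iff_add_eq_zero, add_sum_erase _ _ (mem_univ i), sum_centeredSingle h]
    refine hi (hsum ▸ neg_mem (sum_mem fun j hj => ?_))
    by_contra hj'
    exact (mem_erase.1 hj).1 (hS hj' hi)
  rintro _ ⟨d, hd, rfl⟩
  have hd' : ∑ i, d i = 0 := by simpa using hd
  have hexp : diagonal d = ∑ i, d i • centeredSingle K i := by
    simp only [centeredSingle, smul_sub, sum_sub_distrib, ← sum_smul, hd', zero_smul, sub_zero,
      smul_single, smul_eq_mul, mul_one, sum_single_eq_diagonal]
  simpa [hexp] using sum_mem fun i _ => S.smul_mem (d i) (hmem i)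

end TracelessDiagonal

theorem sum_Icc_one_reflect {M : Type*} [AddCommMonoid M] (g : ℕ → M) {k n : ℕ} (hk : k ≤ n) :
    ∑ u ∈ Icc 1 k, g (n - u + 1) = ∑ u ∈ Icc (n + 1 - k) n, g u :=
  sum_nbij' (fun u => n - u + 1) (fun u => n + 1 - u)
    (fun u hu => by simp only [mem_Icc] at hu ⊢; omega)
    (fun u hu => by simp only [mem_Icc] at hu ⊢; omega)
    (fun u hu => by simp only [mem_Icc] at hu; omega)
    (fun u hu => by simp only [mem_Icc] at hu; omega)
    (fun _ _ => rfl)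

theorem E_succ_self {n : ℕ} (i : Fin n) : E n (i + 1) (i + 1) = single i i 1 := by
  simp [E]

theorem E_self_sub_mem_tracelessDiagonal {n u : ℕ} (hu₁ : 1 ≤ u) (hun : u ≤ n) :
    E n u u - (n : ℂ)⁻¹ • 1 ∈ tracelessDiagonal (Fin n) ℂ := by
  obtain ⟨i, rfl⟩ : ∃ i : Fin n, (i : ℕ) + 1 = u := ⟨⟨u - 1, by omega⟩, Nat.sub_add_cancel hu₁⟩
  simpa [E_succ_self, centeredSingle] using
    centeredSingle_mem_tracelessDiagonal (K := ℂ)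
      (by rw [Fintype.card_fin, Nat.cast_ne_zero]; omega) i

theorem Hperp_zero (n : ℕ) : Hperp n 0 = 0 := by
  simp [Hperp]

theorem neg_one_pow_smul_Hperp_succ {n s : ℕ} (hs : s < n) :
    (-1 : ℂ) ^ (s + 1) • Hperp n (s + 1) = (-1 : ℂ) ^ s • Hperp n s +
      ((E n (s + 1) (s + 1) - (n : ℂ)⁻¹ • 1) + (E n (n - s) (n - s) - (n : ℂ)⁻¹ • 1)) := by
  simp only [Hperp, smul_smul, ← mul_pow, mul_neg, mul_one, neg_neg, one_pow, one_smul,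
    sum_Icc_succ_top (by omega : 1 ≤ s + 1), show n - (s + 1) + 1 = n - s by omega]
  push_cast
  module

def hatIndex (n l : ℕ) : ℕ := if Odd l then n + 1 - l else l

theorem neg_one_pow_smul_Hhat {n l : ℕ} (hl : 1 ≤ l) (hln : 2 * l ≤ n + 1) :
    (-1 : ℂ) ^ l • Hhat n l = (-1 : ℂ) ^ (l - 1) • Hperp n (l - 1) +
      (E n (hatIndex n l) (hatIndex n l) - (n : ℂ)⁻¹ • 1) := by
  obtain ⟨k, rfl⟩ : ∃ k, l = k + 1 := ⟨l - 1, by omega⟩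
  simp only [Hhat, Hperp, hatIndex, add_tsub_cancel_right, smul_smul, ← mul_pow, mul_neg,
    mul_one, neg_neg, one_pow, one_smul, sum_add_distrib, sum_Icc_one_reflect (fun u => E n u u)
    (by omega : k ≤ n)]
  split_ifs with hodd
  · rw [hodd.neg_one_pow, show n - (k + 1) + 1 = n - k by omega,
      show n + 1 - (k + 1) = n - k by omega,
      ← add_sum_Ioc_eq_sum_Icc (by omega : n - k ≤ n), ← Icc_add_one_left_eq_Ioc,
      show n - k + 1 = n + 1 - k by omega]
    push_cast
    module
  · rw [(Nat.not_odd_iff_even.1 hodd).neg_one_pow, sum_Icc_succ_top (by omega : 1 ≤ k + 1),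
      show n - (k + 1) + 2 = n + 1 - k by omega]
    push_cast
    module

theorem neg_one_pow_smul_Hperp_mem_tracelessDiagonal {n s : ℕ} (hs : s ≤ n) :
    (-1 : ℂ) ^ s • Hperp n s ∈ tracelessDiagonal (Fin n) ℂ := by
  induction s with
  | zero => simp [Hperp_zero]
  | succ s ih =>
    rw [neg_one_pow_smul_Hperp_succ (by omega)]
    exact add_mem (ih (by omega)) (add_mem (E_self_sub_mem_tracelessDiagonal (by omega) hs)
      (E_self_sub_mem_tracelessDiagonal (by omega) (by omega)))

theorem Hperp_mem_tracelessDiagonal {n s : ℕ} (hs : s ≤ n) :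
    Hperp n s ∈ tracelessDiagonal (Fin n) ℂ :=
  (Submodule.smul_mem_iff _ (by simp)).1 (neg_one_pow_smul_Hperp_mem_tracelessDiagonal hs)

theorem Hhat_mem_tracelessDiagonal {n l : ℕ} (hl : 1 ≤ l) (hln : 2 * l ≤ n + 1) :
    Hhat n l ∈ tracelessDiagonal (Fin n) ℂ := by
  refine (Submodule.smul_mem_iff _ (by simp : (-1 : ℂ) ^ l ≠ 0)).1 ?_
  rw [neg_one_pow_smul_Hhat hl hln]
  refine add_mem (Submodule.smul_mem _ _ (Hperp_mem_tracelessDiagonal (by omega)))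
    (E_self_sub_mem_tracelessDiagonal ?_ ?_) <;> unfold hatIndex <;> split_ifs <;> omega

section Coverage

variable {n : ℕ} {S : Submodule ℂ (Matrix (Fin n) (Fin n) ℂ)}

theorem E_self_sub_mem_of_Hhat_Hperp_mem (hn : 2 ≤ n)
    (hhat : ∀ l, 1 ≤ l → l ≤ n / 2 → Hhat n l ∈ S)
    (hperp : ∀ s, 1 ≤ s → s ≤ (n - 1) / 2 → Hperp n s ∈ S) {u : ℕ} (hu₁ : 1 ≤ u) (hun : u ≤ n)
    (hu : u ≤ (n - 1) / 2 ∨ n + 1 - (n - 1) / 2 ≤ u ∨ u = hatIndex n (n / 2)) :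
    E n u u - (n : ℂ)⁻¹ • 1 ∈ S := by
  have hperp' : ∀ s ≤ (n - 1) / 2, (-1 : ℂ) ^ s • Hperp n s ∈ S := by
    rintro (_ | s) hs
    · simp [Hperp_zero]
    · exact S.smul_mem _ (hperp _ (by omega) hs)
  have hhat' : ∀ l, 1 ≤ l → l ≤ n / 2 →
      E n (hatIndex n l) (hatIndex n l) - (n : ℂ)⁻¹ • 1 ∈ S := by
    intro l hl hlm
    have h := neg_one_pow_smul_Hhat hl (by omega : 2 * l ≤ n + 1)
    rw [← sub_eq_iff_eq_add'] at h
    exact h ▸ sub_mem (S.smul_mem _ (hhat l hl hlm)) (hperp' _ (by omega))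
  have hpair : ∀ s, 1 ≤ s → s ≤ (n - 1) / 2 →
      E n s s - (n : ℂ)⁻¹ • 1 ∈ S ∧ E n (n + 1 - s) (n + 1 - s) - (n : ℂ)⁻¹ • 1 ∈ S := by
    rintro (_ | s) hs₁ hs
    · omega
    have h := neg_one_pow_smul_Hperp_succ (n := n) (s := s) (by omega)
    rw [show n - s = n + 1 - (s + 1) by omega, ← sub_eq_iff_eq_add'] at h
    have hsum := h ▸ sub_mem (hperp' _ hs) (hperp' _ (by omega))
    have hone := hhat' (s + 1) hs₁ (by omega)
    unfold hatIndex at hone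
    split_ifs at hone
    · exact ⟨by simpa using sub_mem hsum hone, hone⟩
    · exact ⟨hone, by simpa using sub_mem hsum hone⟩
  rcases hu with hu | hu | rfl
  · exact (hpair u hu₁ hu).1
  · simpa [show n + 1 - (n + 1 - u) = u by omega] using (hpair (n + 1 - u) (by omega) (by omega)).2
  · exact hhat' _ (by omega) le_rfl

theorem tracelessDiagonal_le_of_Hhat_Hperp_mem (hn : 2 ≤ n)
    (hhat : ∀ l, 1 ≤ l → l ≤ n / 2 → Hhat n l ∈ S)
    (hperp : ∀ s, 1 ≤ s → s ≤ (n - 1) / 2 → Hperp n s ∈ S) :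
    tracelessDiagonal (Fin n) ℂ ≤ S := by
  refine tracelessDiagonal_le_of_centeredSingle_mem
    (by rw [Fintype.card_fin, Nat.cast_ne_zero]; omega) fun i hi j hj => ?_
  have hcover := fun (i : Fin n) (hi : centeredSingle ℂ i ∉ S) =>
    mt (E_self_sub_mem_of_Hhat_Hperp_mem hn hhat hperp (u := i + 1) (by omega) i.2) (by
      simpa [E_succ_self, centeredSingle] using hi)
  have hi' := hcover i hi
  have hj' := hcover j hj
  unfold hatIndex at hi' hj'
  -- uncovered indices lie in `[(n - 1) / 2 + 1, n - (n - 1) / 2]`, which for odd `n` is a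
  -- single index and for even `n` is `{n / 2, n / 2 + 1}`, containing `hatIndex n (n / 2)`
  ext
  split_ifs at hi' hj' with hodd <;>
    [have := Nat.odd_iff.1 hodd; have := Nat.not_odd_iff.1 hodd] <;> omega

end Coverage

theorem stmt_3 (n : ℕ) (hn : 2 ≤ n) (m p : ℕ) (hm : m = n / 2) (hp : p = (n - 1) / 2)
    (f : Fin m ⊕ Fin p → Matrix (Fin n) (Fin n) ℂ)
    (hf : f = Sum.elim (fun l => Hhat n (l.1 + 1)) (fun s => Hperp n (s.1 + 1))) :
    m + p = n - 1 ∧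
    LinearIndependent ℂ f ∧
    (Submodule.span ℂ (Set.range f) : Set (Matrix (Fin n) (Fin n) ℂ)) =
      {A : Matrix (Fin n) (Fin n) ℂ | A.IsDiag ∧ A.trace = 0} ∧
    Submodule.span ℂ (Set.range fun l : Fin m => Hhat n (l.1 + 1)) ⊓
        Submodule.span ℂ (Set.range fun s : Fin p => Hperp n (s.1 + 1)) = ⊥ ∧
    Submodule.span ℂ (Set.range fun l : Fin m => Hhat n (l.1 + 1)) ⊔
        Submodule.span ℂ (Set.range fun s : Fin p => Hperp n (s.1 + 1)) =
      Submodule.span ℂ (Set.range f) := by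
  subst hm hp
  have hspan : Submodule.span ℂ (Set.range f) = tracelessDiagonal (Fin n) ℂ := by
    refine le_antisymm (Submodule.span_le.2 ?_) (tracelessDiagonal_le_of_Hhat_Hperp_mem hn ?_ ?_)
    · rintro _ ⟨l | s, rfl⟩ <;> simp only [hf, Sum.elim_inl, Sum.elim_inr]
      · exact Hhat_mem_tracelessDiagonal (by omega) (by omega)
      · exact Hperp_mem_tracelessDiagonal (by omega)
    · intro l hl hlm
      exact Submodule.subset_span ⟨Sum.inl ⟨l - 1, by omega⟩, by simp [hf, Nat.sub_add_cancel hl]⟩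
    · intro s hs hsp
      exact Submodule.subset_span ⟨Sum.inr ⟨s - 1, by omega⟩, by simp [hf, Nat.sub_add_cancel hs]⟩
  have hli : LinearIndependent ℂ f := by
    have : Nonempty (Fin n) := ⟨⟨0, by omega⟩⟩
    rw [linearIndependent_iff_card_eq_finrank_span, Set.finrank, hspan, finrank_tracelessDiagonal]
    rw [Fintype.card_sum, Fintype.card_fin, Fintype.card_fin, Fintype.card_fin]
    omega
  refine ⟨by omega, hli, ?_, ?_, ?_⟩
  · ext A
    simp [hspan, mem_tracelessDiagonal_iff]
  · subst hf
    exact disjoint_iff.1 (linearIndependent_sum.1 hli).2.2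
  · rw [hf, Set.Sum.elim_range, Submodule.span_union]
end

section
/- For every l with 1 ≤ l ≤ m and every k with l < k ≤ n−l, the constituent root vectors of the l-th link have the following weights under Ĥ_l: if l is odd then [Ĥ_l, E_{l,k}] = 0 and [Ĥ_l, E_{k,n−l+1}] = E_{k,n−l+1}; if l is even then [Ĥ_l, E_{l,k}] = E_{l,k} and [Ĥ_l, E_{k,n−l+1}] = 0. -/
/-!
`Ĥ_l` is a scalar matrix plus `±` the sum of the diagonal units `E_{u,u}` over two index
intervals `S, T`. The scalar part is central, and `[E_{u,u}, E_{i,j}] = (δ_{u,i} - δ_{u,j}) E_{i,j}`,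
so `E_{i,j}` is a weight vector of weight `±([i ∈ S] - [j ∈ S] + [i ∈ T] - [j ∈ T])`; for the two
root vectors of the `l`-th link these indicators are read off from `l < k ≤ n - l`.
-/

open Matrix Finset

/- Thanks to the junk value `E n i j = 0` off range, the multiplication rules for
matrix units hold for all natural indices. -/
lemma E_diag_mul_E (n u i j : ℕ) : E n u u * E n i j = if u = i then E n i j else 0 := by
  by_cases hij : 1 ≤ i ∧ i ≤ n ∧ 1 ≤ j ∧ j ≤ n
  · split_ifs with hui
    · subst hui
      simp [E, hij]
    · unfold E
      split_ifs with hu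
      · rw [single_mul_single_of_ne]
        simp only [ne_eq, Fin.mk.injEq]
        omega
      · exact zero_mul _
  · simp [E, hij]

lemma E_mul_E_diag (n u i j : ℕ) : E n i j * E n u u = if j = u then E n i j else 0 := by
  by_cases hij : 1 ≤ i ∧ i ≤ n ∧ 1 ≤ j ∧ j ≤ n
  · split_ifs with hju
    · subst hju
      simp [E, hij]
    · unfold E
      split_ifs with hu
      · rw [single_mul_single_of_ne]
        simp only [ne_eq, Fin.mk.injEq]
        omega
      · exact mul_zero _
  · simp [E, hij]

lemma sum_E_diag_mul_sub_mul_sum_E_diag (n i j : ℕ) (s : Finset ℕ) :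
    (∑ u ∈ s, E n u u) * E n i j - E n i j * ∑ u ∈ s, E n u u =
      ((if i ∈ s then 1 else 0) - (if j ∈ s then 1 else 0) : ℂ) • E n i j := by
  simp only [sum_mul, mul_sum, E_diag_mul_E, E_mul_E_diag, sum_ite_eq', sum_ite_eq]
  split_ifs <;> simp

lemma Hhat_mul_E_sub_E_mul_Hhat_of_odd {l : ℕ} (hl : Odd l) (n i j : ℕ) :
    Hhat n l * E n i j - E n i j * Hhat n l =
      -(((if i ∈ Icc 1 (l - 1) then 1 else 0) - (if j ∈ Icc 1 (l - 1) then 1 else 0) : ℂ)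
        + ((if i ∈ Icc (n - l + 1) n then 1 else 0)
          - (if j ∈ Icc (n - l + 1) n then 1 else 0))) • E n i j := by
  rw [Hhat, if_pos hl, neg_smul, add_smul, ← sum_E_diag_mul_sub_mul_sum_E_diag,
    ← sum_E_diag_mul_sub_mul_sum_E_diag]
  simp only [sub_mul, mul_sub, smul_mul_assoc, one_mul, mul_smul_comm, mul_one]
  abel

lemma Hhat_mul_E_sub_E_mul_Hhat_of_even {l : ℕ} (hl : Even l) (n i j : ℕ) :
    Hhat n l * E n i j - E n i j * Hhat n l =
      (((if i ∈ Icc 1 l then 1 else 0) - (if j ∈ Icc 1 l then 1 else 0) : ℂ)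
        + ((if i ∈ Icc (n - l + 2) n then 1 else 0)
          - (if j ∈ Icc (n - l + 2) n then 1 else 0))) • E n i j := by
  rw [Hhat, if_neg (Nat.not_odd_iff_even.mpr hl), add_smul, ← sum_E_diag_mul_sub_mul_sum_E_diag,
    ← sum_E_diag_mul_sub_mul_sum_E_diag]
  simp only [add_mul, mul_add, smul_mul_assoc, one_mul, mul_smul_comm, mul_one]
  abel

theorem stmt_5_general (n : ℕ) (m : ℕ) (hm : m = n / 2)
    (l : ℕ) (hl1 : 1 ≤ l) (hl2 : l ≤ m) (k : ℕ) (hk1 : l < k) (hk2 : k ≤ n - l) :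
    (Odd l →
      Hhat n l * E n l k - E n l k * Hhat n l = 0 ∧
      Hhat n l * E n k (n - l + 1) - E n k (n - l + 1) * Hhat n l = E n k (n - l + 1)) ∧
    (Even l →
      Hhat n l * E n l k - E n l k * Hhat n l = E n l k ∧
      Hhat n l * E n k (n - l + 1) - E n k (n - l + 1) * Hhat n l = 0) := by
  have h2l : 2 * l ≤ n := by omega
  refine ⟨fun hodd => ?_, fun heven => ?_⟩
  · rw [Hhat_mul_E_sub_E_mul_Hhat_of_odd hodd, Hhat_mul_E_sub_E_mul_Hhat_of_odd hodd]
    simp only [mem_Icc]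
    constructor <;> split_ifs <;> first | omega | norm_num
  · rw [Hhat_mul_E_sub_E_mul_Hhat_of_even heven, Hhat_mul_E_sub_E_mul_Hhat_of_even heven]
    simp only [mem_Icc]
    constructor <;> split_ifs <;> first | omega | norm_num

theorem stmt_5 (n : ℕ) (hn : 2 ≤ n) (m : ℕ) (hm : m = n / 2)
    (l : ℕ) (hl1 : 1 ≤ l) (hl2 : l ≤ m) (k : ℕ) (hk1 : l < k) (hk2 : k ≤ n - l) :
    (Odd l →
      Hhat n l * E n l k - E n l k * Hhat n l = 0 ∧
      Hhat n l * E n k (n - l + 1) - E n k (n - l + 1) * Hhat n l = E n k (n - l + 1)) ∧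
    (Even l →
      Hhat n l * E n l k - E n l k * Hhat n l = E n l k ∧
      Hhat n l * E n k (n - l + 1) - E n k (n - l + 1) * Hhat n l = 0) :=
  stmt_5_general n m hm l hl1 hl2 k hk1 hk2
end

section
/- For every even t with 2 ≤ t ≤ p and t + 1 ≤ m and every s with 1 ≤ s ≤ p, the even external coordinate satisfies [ι(H_s^⊥), Ê_t] = δ_{s,t}·Ê_t in the universal enveloping algebra U of gl(n,ℂ). -/
open Matrix Finset

attribute [local instance 100] LieRing.ofAssociativeRing

/-- The universal enveloping algebra `U(gl(n,ℂ))`. -/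
abbrev Ugl (n : ℕ) := UniversalEnvelopingAlgebra ℂ (Matrix (Fin n) (Fin n) ℂ)

/-- The canonical embedding `ι : gl(n,ℂ) → U(gl(n,ℂ))`. -/
noncomputable def ι (n : ℕ) (A : Matrix (Fin n) (Fin n) ℂ) : Ugl n :=
  UniversalEnvelopingAlgebra.ι ℂ A

/-- The even external coordinate `Ê_s` (for even `s`). -/
noncomputable def Ehat (n s : ℕ) : Ugl n :=
  ι n (E n (n - s + 1) (n - s)) + ι n (Hhat n (s + 1) - Hhat n s) * ι n (E n s (n - s))
    + ι n (E n s (s + 1))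

/-!
`H_s^⊥` is diagonal with `u`-th entry `(-1)^s (-2s/n + [u ≤ s] + [u ≥ n-s+1])`, so
`ad ι(H_s^⊥)` scales `ι(E_{i,j})` by the difference of the `i`-th and `j`-th entries. For each of
the three matrix units in `Ê_t` exactly one index lies in the band `{u ≤ s} ∪ {u ≥ n-s+1}` when
`s = t` and both or neither otherwise; as `t` is even the sign `(-1)^s` then disappears. The factor
`ι(Ĥ_{t+1} - Ĥ_t)` is diagonal as well, so it commutes with `ι(H_s^⊥)` and `ad ι(H_s^⊥)` passes
through it.
-/

namespace Matrix

variable {m α : Type*} [Fintype m] [DecidableEq m] [CommRing α]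

theorem IsDiag.commute {A B : Matrix m m α} (hA : A.IsDiag) (hB : B.IsDiag) : Commute A B := by
  rw [← hA.diagonal_diag, ← hB.diagonal_diag]
  exact commute_diagonal _ _

theorem lie_diagonal_single (d : m → α) (i j : m) (c : α) :
    ⁅diagonal d, single i j c⁆ = (d i - d j) • single i j c := by
  ext k l
  simp only [Ring.lie_def, sub_apply, smul_apply, diagonal_mul, mul_diagonal, single_apply,
    smul_eq_mul]
  split_ifs <;> simp_all [mul_comm, mul_sub]

end Matrix

theorem lie_mul_of_commute {A : Type*} [Ring A] {x h b : A} (hxh : Commute x h) :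
    ⁅x, h * b⁆ = h * ⁅x, b⁆ := by
  rw [Ring.lie_def, Ring.lie_def, mul_sub, ← mul_assoc, hxh.eq, mul_assoc, mul_assoc]

section MatrixUnits

variable {n : ℕ}

theorem E_eq_single {i j : ℕ} (hi1 : 1 ≤ i) (hi2 : i ≤ n) (hj1 : 1 ≤ j) (hj2 : j ≤ n) :
    E n i j = single ⟨i - 1, by omega⟩ ⟨j - 1, by omega⟩ 1 :=
  dif_pos ⟨hi1, hi2, hj1, hj2⟩

theorem isDiag_E_self (u : ℕ) : (E n u u).IsDiag := by
  unfold E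
  split_ifs
  · rw [← diagonal_single]
    exact isDiag_diagonal _
  · exact isDiag_zero

theorem isDiag_sum_E_self (S : Finset ℕ) : (∑ u ∈ S, E n u u).IsDiag :=
  Finset.sum_induction _ IsDiag (fun _ _ => IsDiag.add) isDiag_zero fun u _ => isDiag_E_self u

theorem E_self_eq_diagonal {u : ℕ} (hu1 : 1 ≤ u) (hu2 : u ≤ n) :
    E n u u = diagonal fun k : Fin n => if k.1 + 1 = u then 1 else 0 := by
  rw [E_eq_single hu1 hu2 hu1 hu2, ← diagonal_single]
  congr 1
  ext k
  simp only [Pi.single_apply, Fin.ext_iff]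
  congr 1
  simp only [eq_iff_iff]
  omega

theorem sum_E_self_eq_diagonal (S : Finset ℕ) (hS : ∀ u ∈ S, 1 ≤ u ∧ u ≤ n) :
    ∑ u ∈ S, E n u u = diagonal fun k : Fin n => if k.1 + 1 ∈ S then 1 else 0 := by
  rw [sum_congr rfl fun u hu => E_self_eq_diagonal (hS u hu).1 (hS u hu).2]
  refine (map_sum (diagonalAddMonoidHom (Fin n) ℂ)
    (fun u (k : Fin n) => if k.1 + 1 = u then 1 else 0) S).symm.trans ?_
  simp only [diagonalAddMonoidHom_apply]
  congr 1
  ext k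
  simp only [Finset.sum_apply, sum_ite_eq]

theorem sum_E_self_reflect {s : ℕ} (hs : s ≤ n) :
    ∑ u ∈ Icc 1 s, E n (n - u + 1) (n - u + 1) = ∑ u ∈ Icc (n - s + 1) n, E n u u := by
  refine sum_nbij' (fun u => n - u + 1) (fun u => n - u + 1) ?_ ?_ ?_ ?_ fun _ _ => rfl <;>
    intro u hu <;> simp only [mem_Icc] at hu ⊢ <;> omega

end MatrixUnits

theorem isDiag_Hhat (n l : ℕ) : (Hhat n l).IsDiag := by
  unfold Hhat
  split_ifs
  · exact ((isDiag_smul_one _ _).sub (isDiag_sum_E_self _)).sub (isDiag_sum_E_self _)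
  · exact ((isDiag_smul_one _ _).add (isDiag_sum_E_self _)).add (isDiag_sum_E_self _)

noncomputable def hperpWeight (n s i : ℕ) : ℂ :=
  (-1) ^ s * (-(2 * (s : ℂ) / n) + (if i ≤ s then 1 else 0) + (if n - s + 1 ≤ i then 1 else 0))

theorem Hperp_eq_diagonal {n s : ℕ} (hs : s ≤ n) :
    Hperp n s = diagonal fun k => hperpWeight n s (k.1 + 1) := by
  rw [Hperp, sum_add_distrib, sum_E_self_reflect hs,
    sum_E_self_eq_diagonal _ fun u hu => by simp only [mem_Icc] at hu; omega,
    sum_E_self_eq_diagonal _ fun u hu => by simp only [mem_Icc] at hu; omega,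
    smul_one_eq_diagonal, diagonal_add, diagonal_add, ← diagonal_smul]
  congr 1
  ext k
  simp only [Pi.smul_apply, smul_eq_mul, hperpWeight, mem_Icc]
  have := k.2
  split_ifs <;> first | omega | ring

theorem hperpWeight_sub_eq_ite {n s t i j : ℕ} (hs : 2 * s < n) (ht : Even t)
    (hi : i ≤ s ∨ n - s + 1 ≤ i ↔ t ≤ s) (hj : j ≤ s ∨ n - s + 1 ≤ j ↔ t < s) :
    hperpWeight n s i - hperpWeight n s j = if s = t then 1 else 0 := by
  unfold hperpWeight
  obtain rfl | hst := eq_or_ne s t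
  · rw [if_pos rfl, ht.neg_one_pow]
    split_ifs <;> first | omega | ring
  · rw [if_neg hst]
    split_ifs <;> first | omega | ring

theorem lie_ι (n : ℕ) (A B : Matrix (Fin n) (Fin n) ℂ) : ⁅ι n A, ι n B⁆ = ι n ⁅A, B⁆ :=
  ((UniversalEnvelopingAlgebra.ι ℂ).map_lie A B).symm

theorem ι_smul (n : ℕ) (c : ℂ) (A : Matrix (Fin n) (Fin n) ℂ) : ι n (c • A) = c • ι n A :=
  map_smul _ c A

theorem commute_ι {n : ℕ} {A B : Matrix (Fin n) (Fin n) ℂ} (h : Commute A B) :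
    Commute (ι n A) (ι n B) := by
  rw [commute_iff_lie_eq, lie_ι, commute_iff_lie_eq.mp h]
  exact map_zero _

theorem lie_ι_Hperp_ι_E {n s i j : ℕ} (hs : s ≤ n) (hi1 : 1 ≤ i) (hi2 : i ≤ n) (hj1 : 1 ≤ j)
    (hj2 : j ≤ n) :
    ⁅ι n (Hperp n s), ι n (E n i j)⁆ =
      (hperpWeight n s i - hperpWeight n s j) • ι n (E n i j) := by
  rw [lie_ι, Hperp_eq_diagonal hs, E_eq_single hi1 hi2 hj1 hj2, lie_diagonal_single, ι_smul]
  congr 3 <;> exact Nat.sub_add_cancel ‹_›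

theorem stmt_9_general (n : ℕ) (m p : ℕ) (hm : m = n / 2) (hp : p = (n - 1) / 2)
    (t : ℕ) (ht0 : Even t) (ht1 : 2 ≤ t) (htm : t + 1 ≤ m)
    (s : ℕ) (hs2 : s ≤ p) :
    ι n (Hperp n s) * Ehat n t - Ehat n t * ι n (Hperp n s) =
      (if s = t then (1 : ℂ) else 0) • Ehat n t := by
  subst hm hp
  have hs : 2 * s < n := by omega
  have root : ∀ i j, 1 ≤ i → i ≤ n → 1 ≤ j → j ≤ n → (i ≤ s ∨ n - s + 1 ≤ i ↔ t ≤ s) →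
      (j ≤ s ∨ n - s + 1 ≤ j ↔ t < s) →
      ⁅ι n (Hperp n s), ι n (E n i j)⁆ = (if s = t then (1 : ℂ) else 0) • ι n (E n i j) :=
    fun i j hi1 hi2 hj1 hj2 hi hj => by
      rw [lie_ι_Hperp_ι_E (by omega) hi1 hi2 hj1 hj2, hperpWeight_sub_eq_ite hs ht0 hi hj]
  have hcomm : Commute (ι n (Hperp n s)) (ι n (Hhat n (t + 1) - Hhat n t)) := by
    refine commute_ι (IsDiag.commute ?_ ((isDiag_Hhat _ _).sub (isDiag_Hhat _ _)))
    rw [Hperp_eq_diagonal (by omega)]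
    exact isDiag_diagonal _
  rw [← Ring.lie_def, Ehat, lie_add, lie_add, lie_mul_of_commute hcomm,
    root (n - t + 1) (n - t) (by omega) (by omega) (by omega) (by omega) (by omega) (by omega),
    root t (n - t) (by omega) (by omega) (by omega) (by omega) (by omega) (by omega),
    root t (t + 1) (by omega) (by omega) (by omega) (by omega) (by omega) (by omega),
    mul_smul_comm, smul_add, smul_add]

theorem stmt_9 (n : ℕ) (hn : 2 ≤ n) (m p : ℕ) (hm : m = n / 2) (hp : p = (n - 1) / 2)
    (t : ℕ) (ht0 : Even t) (ht1 : 2 ≤ t) (ht2 : t ≤ p) (htm : t + 1 ≤ m)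
    (s : ℕ) (hs1 : 1 ≤ s) (hs2 : s ≤ p) :
    ι n (Hperp n s) * Ehat n t - Ehat n t * ι n (Hperp n s) =
      (if s = t then (1 : ℂ) else 0) • Ehat n t :=
  stmt_9_general n m p hm hp t ht0 ht1 htm s hs2
end

section
/- Let s be even with 2 ≤ s ≤ p and s + 1 ≤ m. In the universal enveloping algebra U of gl(n,ℂ) the even external coordinate Ê_s satisfies the following commutation relations with the initial root vectors: (a) [ι(E_{i,n−i+1}), Ê_s] = 0 for all 1 ≤ i < s; (b) [ι(E_{s,n−s+1}), Ê_s] = (1 + ι(E_{s,n−s+1}))·ι(E_{s,n−s}); (c) [ι(E_{s+1,n−s}), Ê_s] = −(1 + ι(E_{s+1,n−s}))·ι(E_{s,n−s}); (d) [ι(E_{i,n−i+1}), Ê_s] = 0 for all i with s + 1 < i ≤ m. -/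
open Matrix Finset

attribute [local instance 100] LieRing.ofAssociativeRing

/-! Every matrix unit `E_{a,b}` is a weight vector for the adjoint action of the diagonal
matrices `Ĥ_l`. By the Leibniz rule in `U`, bracketing `ι(E_{i,n-i+1})` with `Ê_s` therefore
reduces to products of matrix units and to the weight of `E_{i,n-i+1}` against `Ĥ_{s+1} - Ĥ_s`.
Since `n ≥ 2s + 2`, that weight is `0` except for `i = s` and `i = s + 1`, where it is `±1` and
produces the multiples of `ι(E_{s,n-s})`; the unit products contribute the remaining `ι(E_{s,n-s})`
in (b) and (c). -/

variable {n : ℕ}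

lemma E_mul_E_of_ne (a b c d : ℕ) (hbc : b ≠ c) : E n a b * E n c d = 0 := by
  unfold E
  split_ifs
  · rw [Matrix.single_mul_single_of_ne]
    simp only [ne_eq, Fin.mk.injEq]
    omega
  all_goals simp

lemma E_mul_E_same (a b d : ℕ) (hb : 1 ≤ b) (hbn : b ≤ n) : E n a b * E n b d = E n a d := by
  unfold E
  split_ifs <;> first | (exfalso; omega) | simp

lemma E_mul_sum_E_self (a b : ℕ) (S : Finset ℕ) (hb : 1 ≤ b) (hbn : b ≤ n) :
    E n a b * ∑ u ∈ S, E n u u = if b ∈ S then E n a b else 0 := by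
  rw [Finset.mul_sum, ← Finset.sum_ite_eq S b (fun _ => E n a b)]
  refine Finset.sum_congr rfl fun u _ => ?_
  split_ifs with h
  · rw [← h, E_mul_E_same a b b hb hbn]
  · exact E_mul_E_of_ne a b u u h

lemma sum_E_self_mul_E (a b : ℕ) (S : Finset ℕ) (ha : 1 ≤ a) (han : a ≤ n) :
    (∑ u ∈ S, E n u u) * E n a b = if a ∈ S then E n a b else 0 := by
  rw [Finset.sum_mul, ← Finset.sum_ite_eq' S a (fun _ => E n a b)]
  refine Finset.sum_congr rfl fun u _ => ?_
  split_ifs with h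
  · rw [h, E_mul_E_same a a b ha han]
  · exact E_mul_E_of_ne u u a b h

lemma lie_E_sum_E_self (a b : ℕ) (S : Finset ℕ) (ha : 1 ≤ a) (han : a ≤ n) (hb : 1 ≤ b)
    (hbn : b ≤ n) :
    ⁅E n a b, ∑ u ∈ S, E n u u⁆ =
      ((if b ∈ S then 1 else 0) - (if a ∈ S then 1 else 0) : ℂ) • E n a b := by
  rw [Ring.lie_def, E_mul_sum_E_self a b S hb hbn, sum_E_self_mul_E a b S ha han]
  split_ifs <;> simp

/-- `Hhat n l` is a scalar matrix plus `∑ k, hatWeight n l k • E n k k`. -/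
def hatWeight (n l k : ℕ) : ℂ :=
  if Odd l then -(if k ∈ Icc 1 (l - 1) then 1 else 0) - (if k ∈ Icc (n - l + 1) n then 1 else 0)
  else (if k ∈ Icc 1 l then 1 else 0) + (if k ∈ Icc (n - l + 2) n then 1 else 0)

lemma lie_E_Hhat (l a b : ℕ) (ha : 1 ≤ a) (han : a ≤ n) (hb : 1 ≤ b) (hbn : b ≤ n) :
    ⁅E n a b, Hhat n l⁆ = (hatWeight n l b - hatWeight n l a) • E n a b := by
  have h_one : ⁅E n a b, (1 : Matrix (Fin n) (Fin n) ℂ)⁆ = 0 := by simp [Ring.lie_def]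
  unfold Hhat hatWeight
  by_cases hl : Odd l <;>
    simp only [hl, if_true, if_false, lie_sub, lie_add, lie_smul, h_one, smul_zero,
      lie_E_sum_E_self a b _ ha han hb hbn] <;>
    module

/-- For even `s`, `Hhat n (s + 1) - Hhat n s` is a scalar matrix minus
`∑ k, gapWeight n s k • E n k k`. -/
def gapWeight (n s k : ℕ) : ℂ :=
  2 * (if k ≤ s then 1 else 0) + (if n - s ≤ k then 1 else 0) + (if n - s + 2 ≤ k then 1 else 0)

lemma hatWeight_succ_sub {s : ℕ} (hs : Even s) (k : ℕ) (hk : 1 ≤ k) (hkn : k ≤ n) :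
    hatWeight n (s + 1) k - hatWeight n s k = -gapWeight n s k := by
  have h₁ : (k ∈ Icc 1 (s + 1 - 1)) ↔ k ≤ s := by simp only [mem_Icc]; omega
  have h₂ : (k ∈ Icc (n - (s + 1) + 1) n) ↔ n - s ≤ k := by simp only [mem_Icc]; omega
  have h₃ : (k ∈ Icc 1 s) ↔ k ≤ s := by simp only [mem_Icc]; omega
  have h₄ : (k ∈ Icc (n - s + 2) n) ↔ n - s + 2 ≤ k := by simp only [mem_Icc]; omega
  simp only [hatWeight, gapWeight, hs.add_one, Nat.not_odd_iff_even.mpr hs, if_true, if_false,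
    h₁, h₂, h₃, h₄]
  ring

lemma lie_E_Hhat_succ_sub {s : ℕ} (hs : Even s) (a b : ℕ) (ha : 1 ≤ a) (han : a ≤ n) (hb : 1 ≤ b)
    (hbn : b ≤ n) :
    ⁅E n a b, Hhat n (s + 1) - Hhat n s⁆ = (gapWeight n s a - gapWeight n s b) • E n a b := by
  rw [lie_sub, lie_E_Hhat _ a b ha han hb hbn, lie_E_Hhat _ a b ha han hb hbn, ← sub_smul]
  congr 1
  linear_combination hatWeight_succ_sub hs b hb hbn - hatWeight_succ_sub hs a ha han

lemma ι_lie (A B : Matrix (Fin n) (Fin n) ℂ) : ι n ⁅A, B⁆ = ⁅ι n A, ι n B⁆ :=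
  LieHom.map_lie _ A B

lemma Ring.lie_mul {R : Type*} [Ring R] (x y z : R) : ⁅x, y * z⁆ = ⁅x, y⁆ * z + y * ⁅x, z⁆ := by
  simp only [Ring.lie_def]
  noncomm_ring

lemma lie_ι_Ehat (s : ℕ) (X : Matrix (Fin n) (Fin n) ℂ) :
    ⁅ι n X, Ehat n s⁆ =
      ι n ⁅X, E n (n - s + 1) (n - s)⁆ + ι n ⁅X, Hhat n (s + 1) - Hhat n s⁆ * ι n (E n s (n - s))
        + ι n (Hhat n (s + 1) - Hhat n s) * ι n ⁅X, E n s (n - s)⁆ + ι n ⁅X, E n s (s + 1)⁆ := by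
  rw [Ehat, lie_add, lie_add, Ring.lie_mul, ι_lie, ι_lie, ι_lie, ι_lie]
  abel

lemma lie_E_antidiag_Ehat_of_lt {s i : ℕ} (hs : Even s) (hsn : 2 * s + 2 ≤ n) (hi : 1 ≤ i)
    (his : i < s) : ⁅ι n (E n i (n - i + 1)), Ehat n s⁆ = 0 := by
  rw [lie_ι_Ehat, lie_E_Hhat_succ_sub hs _ _ hi (by omega) (by omega) (by omega)]
  simp (disch := omega) only [gapWeight, if_pos, if_neg, Ring.lie_def, E_mul_E_of_ne]
  norm_num [ι]

lemma lie_E_antidiag_self_Ehat {s : ℕ} (hs : Even s) (hs1 : 1 ≤ s) (hsn : 2 * s + 2 ≤ n) :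
    ⁅ι n (E n s (n - s + 1)), Ehat n s⁆ = (1 + ι n (E n s (n - s + 1))) * ι n (E n s (n - s)) := by
  rw [lie_ι_Ehat, lie_E_Hhat_succ_sub hs _ _ hs1 (by omega) (by omega) (by omega)]
  simp (disch := omega) only [gapWeight, if_pos, if_neg, Ring.lie_def, E_mul_E_of_ne,
    E_mul_E_same]
  norm_num [ι, add_mul]

lemma lie_E_antidiag_succ_Ehat {s : ℕ} (hs : Even s) (hsn : 2 * s + 2 ≤ n) :
    ⁅ι n (E n (s + 1) (n - s)), Ehat n s⁆ =
      -((1 + ι n (E n (s + 1) (n - s))) * ι n (E n s (n - s))) := by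
  rw [lie_ι_Ehat, lie_E_Hhat_succ_sub hs _ _ (by omega) (by omega) (by omega) (by omega)]
  simp (disch := omega) only [gapWeight, if_pos, if_neg, Ring.lie_def, E_mul_E_of_ne,
    E_mul_E_same]
  norm_num [ι, add_mul]

lemma lie_E_antidiag_Ehat_of_gt {s i : ℕ} (hs : Even s) (hsi : s + 1 < i) (hin : 2 * i ≤ n) :
    ⁅ι n (E n i (n - i + 1)), Ehat n s⁆ = 0 := by
  rw [lie_ι_Ehat, lie_E_Hhat_succ_sub hs _ _ (by omega) (by omega) (by omega) (by omega)]
  simp (disch := omega) only [gapWeight, if_neg, Ring.lie_def, E_mul_E_of_ne]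
  norm_num [ι]

theorem stmt_13_general (n : ℕ) (m : ℕ) (hm : m = n / 2)
    (s : ℕ) (hs0 : Even s) (hs1 : 2 ≤ s) (hsm : s + 1 ≤ m) :
    (∀ i, 1 ≤ i → i < s →
      ι n (E n i (n - i + 1)) * Ehat n s - Ehat n s * ι n (E n i (n - i + 1)) = 0) ∧
    (ι n (E n s (n - s + 1)) * Ehat n s - Ehat n s * ι n (E n s (n - s + 1)) =
      (1 + ι n (E n s (n - s + 1))) * ι n (E n s (n - s))) ∧
    (ι n (E n (s + 1) (n - s)) * Ehat n s - Ehat n s * ι n (E n (s + 1) (n - s)) =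
      -((1 + ι n (E n (s + 1) (n - s))) * ι n (E n s (n - s)))) ∧
    (∀ i, s + 1 < i → i ≤ m →
      ι n (E n i (n - i + 1)) * Ehat n s - Ehat n s * ι n (E n i (n - i + 1)) = 0) := by
  have hsn : 2 * s + 2 ≤ n := by omega
  exact ⟨fun i hi his => lie_E_antidiag_Ehat_of_lt hs0 hsn hi his,
    lie_E_antidiag_self_Ehat hs0 (by omega) hsn, lie_E_antidiag_succ_Ehat hs0 hsn,
    fun i hsi him => lie_E_antidiag_Ehat_of_gt hs0 hsi (by omega)⟩

theorem stmt_13 (n : ℕ) (hn : 2 ≤ n) (m p : ℕ) (hm : m = n / 2) (hp : p = (n - 1) / 2)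
    (s : ℕ) (hs0 : Even s) (hs1 : 2 ≤ s) (hs2 : s ≤ p) (hsm : s + 1 ≤ m) :
    (∀ i, 1 ≤ i → i < s →
      ι n (E n i (n - i + 1)) * Ehat n s - Ehat n s * ι n (E n i (n - i + 1)) = 0) ∧
    (ι n (E n s (n - s + 1)) * Ehat n s - Ehat n s * ι n (E n s (n - s + 1)) =
      (1 + ι n (E n s (n - s + 1))) * ι n (E n s (n - s))) ∧
    (ι n (E n (s + 1) (n - s)) * Ehat n s - Ehat n s * ι n (E n (s + 1) (n - s)) =
      -((1 + ι n (E n (s + 1) (n - s))) * ι n (E n s (n - s)))) ∧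
    (∀ i, s + 1 < i → i ≤ m →
      ι n (E n i (n - i + 1)) * Ehat n s - Ehat n s * ι n (E n i (n - i + 1)) = 0) :=
  stmt_13_general n m hm s hs0 hs1 hsm
end
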